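/- arXiv:1809.00278 — 5 statements merged into one kernel-verified Lean document; each statement's English description precedes it below -/
import Mathlib

section
/- Let G be a group, Γ and U subgroups of G, O a commutative ring, and W an O-module equipped with an O-linear action of U. Suppose t_1, …, t_N ∈ G are such that G is the disjoint union of the double cosets Γ t_i U for 1 ≤ i ≤ N. Then the map f ↦ (f(t_1), …, f(t_N)) is an isomorphism of O-modules S(U,W) ≅ ∏_{i=1}^N W^{t_i^{-1}Γ t_i ∩ U}, where W^{t_i^{-1}Γ t_i ∩ U} denotes the submodule of elements of W fixed by the subgroup t_i^{-1}Γ t_i ∩ U of U. -/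
/-- The space `S(U,W)` of algebraic automorphic forms: functions `f : G → W` with
`f (γ * g * u) = u⁻¹ • f g` for `γ ∈ Γ`, `g ∈ G`, `u ∈ U`, where `U` acts on the
`O`-module `W` through `ρ : U →* (W ≃ₗ[O] W)`. -/
def AutomorphicForms (G : Type*) [Group G] (Γ U : Subgroup G)
    (O : Type*) [CommRing O] (W : Type*) [AddCommGroup W] [Module O W]
    (ρ : U →* (W ≃ₗ[O] W)) : Submodule O (G → W) where
  carrier := {f | ∀ γ ∈ Γ, ∀ (g : G), ∀ (u : G) (hu : u ∈ U),
    f (γ * g * u) = ρ (⟨u, hu⟩ : U)⁻¹ (f g)}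
  add_mem' := by
    intro a b ha hb γ hγ g u hu
    simp only [Pi.add_apply, ha γ hγ g u hu, hb γ hγ g u hu, map_add]
  zero_mem' := by
    intro γ hγ g u hu
    simp
  smul_mem' := by
    intro c a ha γ hγ g u hu
    simp only [Pi.smul_apply, ha γ hγ g u hu, map_smul]

/-- The submodule `W^{t⁻¹Γt ∩ U}` of elements of `W` fixed by the subgroup
`t⁻¹Γt ∩ U` of `U` (acting via `ρ`). -/
def ConjInvariants (G : Type*) [Group G] (Γ U : Subgroup G)
    (O : Type*) [CommRing O] (W : Type*) [AddCommGroup W] [Module O W]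
    (ρ : U →* (W ≃ₗ[O] W)) (t : G) : Submodule O W where
  carrier := {w | ∀ (u : G) (hu : u ∈ U),
    u ∈ Subgroup.map (MulAut.conj t⁻¹).toMonoidHom Γ → ρ (⟨u, hu⟩ : U) w = w}
  add_mem' := by
    intro a b ha hb u hu hu'
    simp only [map_add, ha u hu hu', hb u hu hu']
  zero_mem' := by intro u hu hu'; simp
  smul_mem' := by
    intro c a ha u hu hu'
    simp only [map_smul, ha u hu hu']

/-!
A form `f ∈ S(U,W)` is determined on each double coset `Γ t U` by its value at `t`, since
`f (γ * t * u) = u⁻¹ • f t`; this value is fixed by every `u ∈ U` with `t * u * t⁻¹ ∈ Γ`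
because then `t = (t * u * t⁻¹)⁻¹ * t * u`. Conversely, a vector `w` with this invariance gives
a well-defined form `γ * t * u ↦ u⁻¹ • w` supported on `Γ t U`: two decompositions
`γ * t * u = γ' * t * u'` differ by `u' * u⁻¹ = t⁻¹ * (γ'⁻¹ * γ) * t`, which fixes `w`.
Summing these forms over the disjoint double cosets `Γ tᵢ U` inverts `f ↦ (f tᵢ)ᵢ`.
-/

open DoubleCoset

lemma DoubleCoset.mul_mul_mem_doubleCoset_iff {G : Type*} [Group G] {H K : Subgroup G}
    {a g h k : G} (hh : h ∈ H) (hk : k ∈ K) :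
    h * g * k ∈ doubleCoset a H K ↔ g ∈ doubleCoset a H K := by
  simp only [mem_doubleCoset, SetLike.mem_coe]
  constructor
  · rintro ⟨x, hx, y, hy, hxy⟩
    refine ⟨h⁻¹ * x, H.mul_mem (H.inv_mem hh) hx, y * k⁻¹, K.mul_mem hy (K.inv_mem hk), ?_⟩
    calc g = h⁻¹ * (h * g * k) * k⁻¹ := by group
      _ = h⁻¹ * x * a * (y * k⁻¹) := by rw [hxy]; group
  · rintro ⟨x, hx, y, hy, rfl⟩
    exact ⟨h * x, H.mul_mem hh hx, y * k, K.mul_mem hy hk, by group⟩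

section

variable {G : Type*} [Group G] {Γ U : Subgroup G}
  {O : Type*} [CommRing O] {W : Type*} [AddCommGroup W] [Module O W]
  {ρ : U →* (W ≃ₗ[O] W)}

lemma mem_conjInvariants_iff {t : G} {w : W} :
    w ∈ ConjInvariants G Γ U O W ρ t ↔ ∀ u : U, t * u * t⁻¹ ∈ Γ → ρ u w = w := by
  change (∀ (u : G) (hu : u ∈ U), _ → _) ↔ _
  simp only [Subgroup.mem_map_equiv, MulAut.conj_symm_apply, inv_inv, Subtype.forall]

namespace ConjInvariants

lemma apply_inv_eq_of_mul_eq {t : G} {w : W} (hw : w ∈ ConjInvariants G Γ U O W ρ t)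
    {γ γ' : G} (hγ : γ ∈ Γ) (hγ' : γ' ∈ Γ) {u u' : U} (h : γ * t * u = γ' * t * u') :
    ρ u⁻¹ w = ρ u'⁻¹ w := by
  have hconj : t * ↑(u' * u⁻¹) * t⁻¹ = γ'⁻¹ * γ := by
    calc t * ↑(u' * u⁻¹) * t⁻¹ = γ'⁻¹ * (γ' * t * u') * (γ * t * u)⁻¹ * γ := by push_cast; group
      _ = γ'⁻¹ * γ := by rw [h]; group
  have hfix := mem_conjInvariants_iff.1 hw (u' * u⁻¹)
    (hconj ▸ Γ.mul_mem (Γ.inv_mem hγ') hγ)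
  rw [map_mul, LinearEquiv.mul_apply, map_inv] at hfix
  rw [map_inv, map_inv]
  simpa [LinearEquiv.eq_symm_apply] using hfix

end ConjInvariants

namespace AutomorphicForms

lemma apply_mem_conjInvariants (f : AutomorphicForms G Γ U O W ρ) (t : G) :
    (f : G → W) t ∈ ConjInvariants G Γ U O W ρ t := by
  refine mem_conjInvariants_iff.2 fun u hu => ?_
  have h := f.2 (t * u * t⁻¹)⁻¹ (Γ.inv_mem hu) t u u.2
  rw [show (t * u * t⁻¹)⁻¹ * t * u = t by group, map_inv] at h
  simpa using congrArg (ρ u) h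

def evalAt (t : G) : AutomorphicForms G Γ U O W ρ →ₗ[O] ConjInvariants G Γ U O W ρ t where
  toFun f := ⟨(f : G → W) t, apply_mem_conjInvariants f t⟩
  map_add' _ _ := rfl
  map_smul' _ _ := rfl

lemma exists_apply_eq_of_mem_conjInvariants {t : G} {w : W}
    (hw : w ∈ ConjInvariants G Γ U O W ρ t) :
    ∃ f : AutomorphicForms G Γ U O W ρ, (f : G → W) t = w ∧
      ∀ g ∉ doubleCoset t Γ U, (f : G → W) g = 0 := by
  set D := doubleCoset t (Γ : Set G) U
  have hdec : ∀ g ∈ D, ∃ u : U, ∃ γ ∈ Γ, g = γ * t * u := by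
    intro g hg
    obtain ⟨γ, hγ, u, hu, rfl⟩ := mem_doubleCoset.1 hg
    exact ⟨⟨u, hu⟩, γ, hγ, rfl⟩
  choose! u γ hγ hg using hdec
  let f : G → W := D.indicator fun g => ρ (u g)⁻¹ w
  have hf : f ∈ AutomorphicForms G Γ U O W ρ := by
    intro γ₀ hγ₀ g v hv
    by_cases hgD : g ∈ D
    · have hD : γ₀ * g * v ∈ D := (mul_mul_mem_doubleCoset_iff hγ₀ hv).2 hgD
      simp only [f, Set.indicator_of_mem hD, Set.indicator_of_mem hgD]
      rw [← LinearEquiv.mul_apply, ← map_mul, ← mul_inv_rev]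
      refine ConjInvariants.apply_inv_eq_of_mul_eq hw (hγ _ hD)
        (Γ.mul_mem hγ₀ (hγ g hgD)) ?_
      rw [← hg _ hD]
      conv_lhs => rw [hg g hgD]
      simp [mul_assoc]
    · have hD : γ₀ * g * v ∉ D := mt (mul_mul_mem_doubleCoset_iff hγ₀ hv).1 hgD
      simp [f, Set.indicator_of_notMem hD, Set.indicator_of_notMem hgD]
  have htD : t ∈ D := mem_doubleCoset_self Γ U t
  refine ⟨⟨f, hf⟩, ?_, fun g hg => Set.indicator_of_notMem hg (fun g => ρ (u g)⁻¹ w)⟩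
  change f t = w
  rw [show f t = _ from Set.indicator_of_mem htD _,
    ConjInvariants.apply_inv_eq_of_mul_eq hw (hγ t htD) Γ.one_mem (u' := 1)
      (by simpa using (hg t htD).symm)]
  simp

variable {ι : Type*} {t : ι → G}

lemma pi_evalAt_injective (hcover : ∀ g, ∃ i, g ∈ doubleCoset (t i) Γ U) :
    Function.Injective (LinearMap.pi fun i => evalAt (Γ := Γ) (ρ := ρ) (t i)) := by
  intro f₁ f₂ h
  ext g
  obtain ⟨i, hi⟩ := hcover g
  obtain ⟨γ, hγ, u, hu, rfl⟩ := mem_doubleCoset.1 hi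
  have hfi : (f₁ : G → W) (t i) = (f₂ : G → W) (t i) := congrArg Subtype.val (congrFun h i)
  rw [f₁.2 γ hγ (t i) u hu, f₂.2 γ hγ (t i) u hu, hfi]

lemma pi_evalAt_surjective [Fintype ι]
    (hdistinct : ∀ i j, t j ∈ doubleCoset (t i) Γ U → i = j) :
    Function.Surjective (LinearMap.pi fun i => evalAt (Γ := Γ) (ρ := ρ) (t i)) := by
  intro w
  choose f hft hfsupp using fun i => exists_apply_eq_of_mem_conjInvariants (w i).2
  refine ⟨∑ i, f i, funext fun j => Subtype.ext ?_⟩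
  change ((∑ i, f i : AutomorphicForms G Γ U O W ρ) : G → W) (t j) = w j
  rw [Submodule.coe_sum, Finset.sum_apply, Finset.sum_eq_single j
    (fun i _ hij => hfsupp i (t j) (mt (hdistinct i j) hij)) (by simp), hft]

end AutomorphicForms

end

open AutomorphicForms in
/-- Let `G` be a group, `Γ, U ≤ G` subgroups, `O` a commutative ring,
and `W` an `O`-module with an `O`-linear action `ρ` of `U`.  If `G` is the disjoint union
of the double cosets `Γ tᵢ U` for `i = 1, …, N`, then `f ↦ (f t₁, …, f t_N)` is an
isomorphism of `O`-modules `S(U,W) ≅ ∏ᵢ W^{tᵢ⁻¹Γtᵢ ∩ U}`. -/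
theorem automorphicForms_equiv_pi_invariants
    (G : Type*) [Group G] (Γ U : Subgroup G)
    (O : Type*) [CommRing O] (W : Type*) [AddCommGroup W] [Module O W]
    (ρ : U →* (W ≃ₗ[O] W))
    (N : ℕ) (t : Fin N → G)
    (ht : ∀ g : G, ∃! i : Fin N, ∃ γ ∈ Γ, ∃ u ∈ U, g = γ * t i * u) :
    ∃ e : AutomorphicForms G Γ U O W ρ ≃ₗ[O]
        (∀ i : Fin N, ConjInvariants G Γ U O W ρ (t i)),
      ∀ (f : AutomorphicForms G Γ U O W ρ) (i : Fin N),
        (e f i : W) = (f : G → W) (t i) := by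
  have hcover : ∀ g, ∃ i, g ∈ doubleCoset (t i) Γ U := fun g =>
    (ht g).exists.imp fun _ => mem_doubleCoset.2
  have hdistinct : ∀ i j, t j ∈ doubleCoset (t i) Γ U → i = j := fun i j hj =>
    (ht (t j)).unique (mem_doubleCoset.1 hj) (mem_doubleCoset.1 (mem_doubleCoset_self _ _ _))
  exact ⟨LinearEquiv.ofBijective _ ⟨pi_evalAt_injective hcover, pi_evalAt_surjective hdistinct⟩,
    fun _ _ => rfl⟩
end

section
/- Let G be a group, Γ and U subgroups of G, O a commutative ring, and W a free O-module equipped with an O-linear action of U. Suppose t_1, …, t_N ∈ G are such that G is the disjoint union of the double cosets Γ t_i U, and suppose that for each i the group t_i^{-1}Γ t_i ∩ U is finite of order invertible in O. Then for every O-module A the natural map S(U,W) ⊗_O A → S(U, W ⊗_O A) is an isomorphism, where U acts on W ⊗_O A through its action on W. In particular, the functor A ↦ S(U, W ⊗_O A) on O-modules is exact, and if O = O_E with residue field 𝔽 then S(U,W) ⊗_{O_E} 𝔽 → S(U, W ⊗_{O_E} 𝔽) is an isomorphism. -/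
open scoped TensorProduct

/-- The `O`-linear action of `U` on `W ⊗[O] A` through its action on `W`. -/
noncomputable def tensorRep {G : Type*} [Group G] {U : Subgroup G}
    {O : Type*} [CommRing O] {W : Type*} [AddCommGroup W] [Module O W]
    (ρ : U →* (W ≃ₗ[O] W)) (A : Type*) [AddCommGroup A] [Module O A] :
    U →* ((W ⊗[O] A) ≃ₗ[O] (W ⊗[O] A)) where
  toFun u := TensorProduct.congr (ρ u) (LinearEquiv.refl O A)
  map_one' := by
    refine LinearEquiv.toLinearMap_injective (TensorProduct.ext' ?_)
    intro w a
    simp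
  map_mul' := by
    intro u v
    refine LinearEquiv.toLinearMap_injective (TensorProduct.ext' ?_)
    intro w a
    simp only [map_mul, LinearEquiv.coe_coe, TensorProduct.congr_tmul, LinearEquiv.refl_apply]
    rfl

/-- `f ⊗ a ↦ (g ↦ f g ⊗ a)`, as an element of `S(U, W ⊗ A)`. -/
noncomputable def tensorForm {G : Type*} [Group G] {Γ U : Subgroup G}
    {O : Type*} [CommRing O] {W : Type*} [AddCommGroup W] [Module O W]
    {ρ : U →* (W ≃ₗ[O] W)} {A : Type*} [AddCommGroup A] [Module O A]
    (f : AutomorphicForms G Γ U O W ρ) (a : A) :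
    AutomorphicForms G Γ U O (W ⊗[O] A) (tensorRep ρ A) :=
  ⟨fun g => (f : G → W) g ⊗ₜ[O] a, by
    intro γ hγ g u hu
    change ((f : G → W) (γ * g * u)) ⊗ₜ[O] a =
      ((tensorRep ρ A) (⟨u, hu⟩ : U)⁻¹) (((f : G → W) g) ⊗ₜ[O] a)
    rw [f.2 γ hγ g u hu]
    simp [tensorRep]⟩

/-- The natural map `S(U,W) ⊗[O] A → S(U, W ⊗[O] A)`, sending `f ⊗ a` to `g ↦ f g ⊗ a`. -/
noncomputable def autFormsTensorMap (G : Type*) [Group G] (Γ U : Subgroup G)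
    (O : Type*) [CommRing O] (W : Type*) [AddCommGroup W] [Module O W]
    (ρ : U →* (W ≃ₗ[O] W)) (A : Type*) [AddCommGroup A] [Module O A] :
    (AutomorphicForms G Γ U O W ρ) ⊗[O] A →ₗ[O]
      AutomorphicForms G Γ U O (W ⊗[O] A) (tensorRep ρ A) :=
  TensorProduct.lift
    { toFun := fun f =>
        { toFun := fun a => tensorForm f a
          map_add' := by
            intro a b
            apply Subtype.ext
            funext g
            simp [tensorForm, TensorProduct.tmul_add]
          map_smul' := by
            intro c a
            apply Subtype.ext
            funext g
            simp [tensorForm, TensorProduct.tmul_smul] }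
      map_add' := by
        intro f f'
        apply LinearMap.ext
        intro a
        apply Subtype.ext
        funext g
        simp [tensorForm, TensorProduct.add_tmul]
      map_smul' := by
        intro c f
        apply LinearMap.ext
        intro a
        apply Subtype.ext
        funext g
        simp [tensorForm, TensorProduct.smul_tmul'] }

/-!
Evaluation at the `tᵢ` identifies `S(U, M)` with `⨁ᵢ M^{Hᵢ}`, `Hᵢ = tᵢ⁻¹ Γ tᵢ ∩ U`: an
`Hᵢ`-invariant vector extends uniquely to a form supported on `Γ tᵢ U`. Since `|Hᵢ|` is
invertible, averaging over `Hᵢ` is a projection of `M` onto `M^{Hᵢ}`, and it commutes with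
`- ⊗ A`. Hence `F ↦ ∑ᵢ (extend ∘ average ⊗ id) (F tᵢ)` inverts `S(U, W) ⊗ A → S(U, W ⊗ A)`.
-/

theorem Representation.rTensor_averageMap {k H V : Type*} [CommRing k] [Group H] [Fintype H]
    [Invertible (Fintype.card H : k)] [AddCommGroup V] [Module k V] (σ : Representation k H V)
    (A : Type*) [AddCommGroup A] [Module k A] :
    σ.averageMap.rTensor A = (σ.tprod (Representation.trivial k H A)).averageMap := by
  ext v a
  simp [GroupAlgebra.average, map_sum, TensorProduct.sum_tmul]

namespace AutomorphicForms

variable {G : Type*} [Group G] {Γ U : Subgroup G} {O : Type*} [CommRing O]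
  {M : Type*} [AddCommGroup M] [Module O M] {ρ : U →* (M ≃ₗ[O] M)}

/-- `t⁻¹ Γ t ∩ U`, the stabilizer of the coset `Γ t` under right multiplication by `U`. -/
def cosetStabilizer (Γ U : Subgroup G) (t : G) : Subgroup G :=
  Γ.map (MulAut.conj t⁻¹).toMonoidHom ⊓ U

lemma mem_cosetStabilizer {t h : G} :
    h ∈ cosetStabilizer Γ U t ↔ t * h * t⁻¹ ∈ Γ ∧ h ∈ U := by
  rw [cosetStabilizer, Subgroup.mem_inf, Subgroup.mem_map_equiv, MulAut.conj_symm_apply,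
    inv_inv]

variable (Γ ρ) in
def cosetStabilizerRep (t : G) : Representation O (cosetStabilizer Γ U t) M :=
  LinearEquiv.automorphismGroup.toLinearMapMonoidHom.comp
    (ρ.comp (Subgroup.inclusion inf_le_right))

lemma apply_eq_of_mem_invariants {t : G} {w : M}
    (hw : w ∈ (cosetStabilizerRep Γ ρ t).invariants) (u : U) (hu : t * u * t⁻¹ ∈ Γ) :
    ρ u w = w :=
  hw ⟨u, mem_cosetStabilizer.2 ⟨hu, u.2⟩⟩

lemma cosetStabilizerRep_tensorRep (t : G) (A : Type*) [AddCommGroup A] [Module O A] :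
    cosetStabilizerRep Γ (tensorRep ρ A) t =
      (cosetStabilizerRep Γ ρ t).tprod (Representation.trivial O _ A) := by
  ext h m a
  simp [cosetStabilizerRep, tensorRep]

lemma apply_mul_mul (f : AutomorphicForms G Γ U O M ρ) {γ : G} (hγ : γ ∈ Γ) (g : G) (u : U) :
    (f : G → M) (γ * g * u) = ρ u⁻¹ ((f : G → M) g) :=
  f.2 γ hγ g u u.2

@[simp]
lemma autFormsTensorMap_tmul_apply (A : Type*) [AddCommGroup A] [Module O A]
    (f : AutomorphicForms G Γ U O M ρ) (a : A) (g : G) :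
    (autFormsTensorMap G Γ U O M ρ A (f ⊗ₜ a) : G → M ⊗[O] A) g = (f : G → M) g ⊗ₜ a :=
  rfl

lemma apply_mem_invariants (f : AutomorphicForms G Γ U O M ρ) (t : G) :
    (f : G → M) t ∈ (cosetStabilizerRep Γ ρ t).invariants := by
  rintro ⟨h, hh⟩
  obtain ⟨hγ, hU⟩ := mem_cosetStabilizer.1 hh
  have hf := apply_mul_mul f (inv_mem hγ) t ⟨h, hU⟩
  rw [show (t * h * t⁻¹)⁻¹ * t * h = t by group] at hf
  change ρ ⟨h, hU⟩ ((f : G → M) t) = (f : G → M) t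
  conv_lhs => rw [hf]
  rw [← LinearEquiv.mul_apply, ← map_mul, mul_inv_cancel, map_one]
  rfl

lemma eq_of_forall_apply_eq {ι : Type*} {t : ι → G}
    (hcover : ∀ g : G, ∃ i, ∃ γ ∈ Γ, ∃ u ∈ U, g = γ * t i * u)
    {f f' : AutomorphicForms G Γ U O M ρ} (h : ∀ i, (f : G → M) (t i) = (f' : G → M) (t i)) :
    f = f' := by
  refine Subtype.ext (funext fun g => ?_)
  obtain ⟨i, γ, hγ, u, hu, rfl⟩ := hcover g
  rw [apply_mul_mul f hγ _ ⟨u, hu⟩, apply_mul_mul f' hγ _ ⟨u, hu⟩, h i]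

section ExtendByZero

variable {t : G}

variable (Γ ρ t) in
open Classical in
/-- Only independent of the choice of `u` when `w` is fixed by `t⁻¹ Γ t ∩ U`. -/
noncomputable def extendByZeroFun (w : M) (g : G) : M :=
  if h : ∃ u : U, ∃ γ ∈ Γ, g = γ * t * u then ρ h.choose⁻¹ w else 0

lemma extendByZeroFun_apply_mul {w : M} (hw : w ∈ (cosetStabilizerRep Γ ρ t).invariants)
    {γ : G} (hγ : γ ∈ Γ) (u : U) : extendByZeroFun Γ ρ t w (γ * t * u) = ρ u⁻¹ w := by
  have hg : ∃ v : U, ∃ γ' ∈ Γ, γ * t * u = γ' * t * v := ⟨u, γ, hγ, rfl⟩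
  rw [extendByZeroFun, dif_pos hg]
  obtain ⟨γ', hγ', he⟩ := hg.choose_spec
  set v := hg.choose
  have hvu : t * ↑(v * u⁻¹) * t⁻¹ ∈ Γ := by
    have : t * ↑(v * u⁻¹) * t⁻¹ = γ'⁻¹ * γ :=
      calc t * ↑(v * u⁻¹) * t⁻¹ = γ'⁻¹ * (γ' * t * v) * (γ * t * u)⁻¹ * γ := by
            push_cast; group
        _ = γ'⁻¹ * γ := by rw [← he]; group
    exact this ▸ mul_mem (inv_mem hγ') hγ
  calc ρ v⁻¹ w = ρ v⁻¹ (ρ (v * u⁻¹) w) := by rw [apply_eq_of_mem_invariants hw _ hvu]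
    _ = ρ u⁻¹ w := by rw [← LinearEquiv.mul_apply, ← map_mul, inv_mul_cancel_left]

lemma extendByZeroFun_of_not_exists {g : G} (hg : ¬∃ u : U, ∃ γ ∈ Γ, g = γ * t * u) (w : M) :
    extendByZeroFun Γ ρ t w g = 0 :=
  dif_neg hg

lemma extendByZeroFun_mem {w : M} (hw : w ∈ (cosetStabilizerRep Γ ρ t).invariants) :
    extendByZeroFun Γ ρ t w ∈ AutomorphicForms G Γ U O M ρ := by
  intro γ hγ g u hu
  by_cases hg : ∃ v : U, ∃ γ₀ ∈ Γ, g = γ₀ * t * v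
  · obtain ⟨v, γ₀, hγ₀, rfl⟩ := hg
    have e : γ * (γ₀ * t * v) * u = (γ * γ₀) * t * ↑(v * ⟨u, hu⟩) := by push_cast; group
    rw [e, extendByZeroFun_apply_mul hw (mul_mem hγ hγ₀), extendByZeroFun_apply_mul hw hγ₀,
      mul_inv_rev, map_mul, LinearEquiv.mul_apply]
  · have hg' : ¬∃ v : U, ∃ γ₀ ∈ Γ, γ * g * u = γ₀ * t * v := by
      rintro ⟨v, γ₀, hγ₀, he⟩
      refine hg ⟨v * ⟨u, hu⟩⁻¹, γ⁻¹ * γ₀, mul_mem (inv_mem hγ) hγ₀, ?_⟩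
      calc g = γ⁻¹ * (γ * g * u) * u⁻¹ := by group
        _ = _ := by rw [he]; push_cast; group
    rw [extendByZeroFun_of_not_exists hg, extendByZeroFun_of_not_exists hg', map_zero]

variable (Γ ρ t) in
noncomputable def extendByZero :
    (cosetStabilizerRep Γ ρ t).invariants →ₗ[O] AutomorphicForms G Γ U O M ρ where
  toFun w := ⟨extendByZeroFun Γ ρ t w, extendByZeroFun_mem w.2⟩
  map_add' w w' := Subtype.ext <| funext fun g => by
    show extendByZeroFun Γ ρ t (w + w' : M) g =
      extendByZeroFun Γ ρ t w g + extendByZeroFun Γ ρ t w' g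
    unfold extendByZeroFun
    split_ifs <;> simp
  map_smul' c w := Subtype.ext <| funext fun g => by
    show extendByZeroFun Γ ρ t (c • (w : M)) g = c • extendByZeroFun Γ ρ t w g
    unfold extendByZeroFun
    split_ifs <;> simp

end ExtendByZero

section AverageExtend

variable {t : G} [Fintype (cosetStabilizer Γ U t)]
  [Invertible (Fintype.card (cosetStabilizer Γ U t) : O)]

variable (Γ ρ t) in
noncomputable def averageExtend : M →ₗ[O] AutomorphicForms G Γ U O M ρ :=
  extendByZero Γ ρ t ∘ₗ (cosetStabilizerRep Γ ρ t).isProj_averageMap.codRestrict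

lemma averageExtend_apply_mul (w : M) {γ : G} (hγ : γ ∈ Γ) (u : U) :
    (averageExtend Γ ρ t w : G → M) (γ * t * u) =
      ρ u⁻¹ ((cosetStabilizerRep Γ ρ t).averageMap w) :=
  extendByZeroFun_apply_mul ((cosetStabilizerRep Γ ρ t).averageMap_invariant w) hγ u

lemma averageExtend_apply_self (w : M) :
    (averageExtend Γ ρ t w : G → M) t = (cosetStabilizerRep Γ ρ t).averageMap w := by
  simpa using averageExtend_apply_mul (ρ := ρ) (t := t) w (one_mem Γ) 1

lemma averageExtend_apply_of_not_exists {g : G} (hg : ¬∃ u : U, ∃ γ ∈ Γ, g = γ * t * u)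
    (w : M) : (averageExtend Γ ρ t w : G → M) g = 0 :=
  extendByZeroFun_of_not_exists hg _

lemma autFormsTensorMap_comp_rTensor_averageExtend (A : Type*) [AddCommGroup A] [Module O A] :
    autFormsTensorMap G Γ U O M ρ A ∘ₗ (averageExtend Γ ρ t).rTensor A =
      averageExtend Γ (tensorRep ρ A) t := by
  refine TensorProduct.ext' fun w a => Subtype.ext <| funext fun g => ?_
  rw [LinearMap.comp_apply, LinearMap.rTensor_tmul, autFormsTensorMap_tmul_apply]
  by_cases hg : ∃ u : U, ∃ γ ∈ Γ, g = γ * t * u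
  · obtain ⟨u, γ, hγ, rfl⟩ := hg
    rw [averageExtend_apply_mul w hγ, averageExtend_apply_mul _ hγ, cosetStabilizerRep_tensorRep,
      ← Representation.rTensor_averageMap, LinearMap.rTensor_tmul]
    simp [tensorRep]
  · rw [averageExtend_apply_of_not_exists hg, averageExtend_apply_of_not_exists hg,
      TensorProduct.zero_tmul]

end AverageExtend

section Inverse

variable {ι : Type*} [Fintype ι] {t : ι → G} [∀ i, Fintype (cosetStabilizer Γ U (t i))]
  [∀ i, Invertible (Fintype.card (cosetStabilizer Γ U (t i)) : O)]
  (A : Type*) [AddCommGroup A] [Module O A]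

lemma sum_averageExtend_apply (ht : ∀ g : G, ∃! i, ∃ γ ∈ Γ, ∃ u ∈ U, g = γ * t i * u)
    (f : AutomorphicForms G Γ U O M ρ) :
    ∑ i, averageExtend Γ ρ (t i) ((f : G → M) (t i)) = f := by
  refine eq_of_forall_apply_eq (fun g => (ht g).exists) fun k => ?_
  rw [Submodule.coe_sum, Finset.sum_apply, Finset.sum_eq_single k]
  · rw [averageExtend_apply_self, Representation.averageMap_id _ _ (apply_mem_invariants f _)]
  · intro i _ hik
    refine averageExtend_apply_of_not_exists ?_ _
    rintro ⟨u, γ, hγ, he⟩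
    exact hik ((ht (t k)).unique ⟨γ, hγ, u, u.2, he⟩ ⟨1, one_mem Γ, 1, one_mem U, by simp⟩)
  · simp

variable (Γ ρ t) in
noncomputable def autFormsTensorInv :
    AutomorphicForms G Γ U O (M ⊗[O] A) (tensorRep ρ A) →ₗ[O]
      AutomorphicForms G Γ U O M ρ ⊗[O] A :=
  ∑ i, (averageExtend Γ ρ (t i)).rTensor A ∘ₗ LinearMap.proj (t i) ∘ₗ Submodule.subtype _

lemma autFormsTensorMap_comp_autFormsTensorInv
    (ht : ∀ g : G, ∃! i, ∃ γ ∈ Γ, ∃ u ∈ U, g = γ * t i * u) :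
    autFormsTensorMap G Γ U O M ρ A ∘ₗ autFormsTensorInv Γ ρ t A = LinearMap.id := by
  refine LinearMap.ext fun F => ?_
  calc autFormsTensorMap G Γ U O M ρ A (autFormsTensorInv Γ ρ t A F)
      = ∑ i, (autFormsTensorMap G Γ U O M ρ A ∘ₗ (averageExtend Γ ρ (t i)).rTensor A)
          ((F : G → M ⊗[O] A) (t i)) := by
        simp [autFormsTensorInv, map_sum]
    _ = ∑ i, averageExtend Γ (tensorRep ρ A) (t i) ((F : G → M ⊗[O] A) (t i)) := by
        simp_rw [autFormsTensorMap_comp_rTensor_averageExtend]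
    _ = F := sum_averageExtend_apply ht F

lemma autFormsTensorInv_comp_autFormsTensorMap
    (ht : ∀ g : G, ∃! i, ∃ γ ∈ Γ, ∃ u ∈ U, g = γ * t i * u) :
    autFormsTensorInv Γ ρ t A ∘ₗ autFormsTensorMap G Γ U O M ρ A = LinearMap.id := by
  refine TensorProduct.ext' fun f a => ?_
  calc autFormsTensorInv Γ ρ t A (autFormsTensorMap G Γ U O M ρ A (f ⊗ₜ a))
      = ∑ i, averageExtend Γ ρ (t i) ((f : G → M) (t i)) ⊗ₜ a := by
        simp [autFormsTensorInv, LinearMap.rTensor_tmul]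
    _ = f ⊗ₜ a := by rw [← TensorProduct.sum_tmul, sum_averageExtend_apply ht]

end Inverse

end AutomorphicForms

theorem autFormsTensorMap_bijective_general
    (G : Type*) [Group G] (Γ U : Subgroup G)
    (O : Type*) [CommRing O] (W : Type*) [AddCommGroup W] [Module O W]
    (ρ : U →* (W ≃ₗ[O] W))
    (N : ℕ) (t : Fin N → G)
    (ht : ∀ g : G, ∃! i : Fin N, ∃ γ ∈ Γ, ∃ u ∈ U, g = γ * t i * u)
    (hfin : ∀ i : Fin N,
      Finite ↥(Subgroup.map (MulAut.conj (t i)⁻¹).toMonoidHom Γ ⊓ U))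
    (hinv : ∀ i : Fin N,
      IsUnit ((Nat.card ↥(Subgroup.map (MulAut.conj (t i)⁻¹).toMonoidHom Γ ⊓ U) : ℕ) : O)) :
    ∀ (A : Type*) [AddCommGroup A] [Module O A],
      Function.Bijective (autFormsTensorMap G Γ U O W ρ A) := by
  intro A _ _
  open AutomorphicForms in
  let (i : Fin N) : Fintype (cosetStabilizer Γ U (t i)) := @Fintype.ofFinite _ (hfin i)
  open AutomorphicForms in
  let (i : Fin N) : Invertible (Fintype.card (cosetStabilizer Γ U (t i)) : O) :=
    (Nat.card_eq_fintype_card (α := cosetStabilizer Γ U (t i)) ▸ hinv i).invertible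
  open AutomorphicForms in
  exact Function.bijective_iff_has_inverse.2 ⟨autFormsTensorInv Γ ρ t A,
    LinearMap.congr_fun (autFormsTensorInv_comp_autFormsTensorMap A ht),
    LinearMap.congr_fun (autFormsTensorMap_comp_autFormsTensorInv A ht)⟩

/-- Let `G` be a group, `Γ, U ≤ G` subgroups, `O` a commutative ring,
and `W` a *free* `O`-module with an `O`-linear action `ρ` of `U`.  Suppose `G` is the
disjoint union of double cosets `Γ tᵢ U` and each group `tᵢ⁻¹Γtᵢ ∩ U` is finite of order
invertible in `O`.  Then for every `O`-module `A` the natural map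
`S(U,W) ⊗_O A → S(U, W ⊗_O A)` is an isomorphism. -/
theorem autFormsTensorMap_bijective
    (G : Type*) [Group G] (Γ U : Subgroup G)
    (O : Type*) [CommRing O] (W : Type*) [AddCommGroup W] [Module O W] [Module.Free O W]
    (ρ : U →* (W ≃ₗ[O] W))
    (N : ℕ) (t : Fin N → G)
    (ht : ∀ g : G, ∃! i : Fin N, ∃ γ ∈ Γ, ∃ u ∈ U, g = γ * t i * u)
    (hfin : ∀ i : Fin N,
      Finite ↥(Subgroup.map (MulAut.conj (t i)⁻¹).toMonoidHom Γ ⊓ U))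
    (hinv : ∀ i : Fin N,
      IsUnit ((Nat.card ↥(Subgroup.map (MulAut.conj (t i)⁻¹).toMonoidHom Γ ⊓ U) : ℕ) : O)) :
    ∀ (A : Type*) [AddCommGroup A] [Module O A],
      Function.Bijective (autFormsTensorMap G Γ U O W ρ A) :=
  autFormsTensorMap_bijective_general G Γ U O W ρ N t ht hfin hinv
end

section
/- Let G be a group, Γ and U subgroups of G, and let W be a free O_E-module equipped with an O_E-linear action of U. Suppose t_1, …, t_N ∈ G are such that G is the disjoint union of the double cosets Γ t_i U. Then the natural map S(U,W) ⊗_{O_E} E → S(U, W ⊗_{O_E} E) is an isomorphism, where U acts on W ⊗_{O_E} E through its action on W. (No hypothesis on the groups t_i^{-1}Γ t_i ∩ U is needed.) -/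
open scoped TensorProduct

/-! `W ⊗ E` is the localization of `W` at the non-zero-divisors of `O`, and `W`, being flat, has
no torsion, so `w ↦ w ⊗ 1` is injective; this gives injectivity. A form `F` with values in
`W ⊗ E` is determined by its finitely many values `F tᵢ`, so a common denominator `s` of these
makes `s • F` take values in `W`, hence come from `S(U, W)`; since `s` acts invertibly on both
sides, `F` itself is in the image. -/

section Localization

variable {R : Type*} [CommRing R] (S : Submonoid R)

theorem IsLocalizedModule.surjective_of_exists_smul_mem_range
    {M M' N : Type*} [AddCommMonoid M] [Module R M] [AddCommMonoid M'] [Module R M']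
    [AddCommGroup N] [Module R N] (f : M →ₗ[R] M') [IsLocalizedModule S f] {g : M' →ₗ[R] N}
    (hN : ∀ s : S, Function.Injective fun n : N => (s : R) • n)
    (H : ∀ n, ∃ s : S, ∃ m, g (f m) = (s : R) • n) : Function.Surjective g := by
  intro n
  obtain ⟨s, m, hm⟩ := H n
  obtain ⟨y, hy⟩ :=
    ((Module.End.isUnit_iff _).mp (IsLocalizedModule.map_units f s)).surjective (f m)
  rw [Module.algebraMap_end_apply] at hy
  refine ⟨y, hN s ?_⟩
  simp only [← map_smul, hy, hm]

variable (A : Type*) [CommRing A] [Algebra R A] [IsLocalization S A]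

instance isLocalizedModule_tmul_one (M : Type*) [AddCommGroup M] [Module R M] :
    IsLocalizedModule S ((TensorProduct.mk R M A).flip 1) := by
  have : (TensorProduct.mk R M A).flip 1 =
      (TensorProduct.comm R A M).toLinearMap ∘ₗ TensorProduct.mk R A M 1 := by
    ext; rfl
  rw [this]
  infer_instance

end Localization

section AutomorphicForms

variable {G : Type*} [Group G] {Γ U : Subgroup G} {O : Type*} [CommRing O]
  {W : Type*} [AddCommGroup W] [Module O W] {ρ : U →* (W ≃ₗ[O] W)}
  {A : Type*} [CommRing A] [Algebra O A]

@[simp]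
theorem tensorRep_tmul (u : U) (w : W) (a : A) :
    tensorRep ρ A u (w ⊗ₜ a) = ρ u w ⊗ₜ a :=
  rfl

@[simp]
theorem autFormsTensorMap_tmul_apply (f : AutomorphicForms G Γ U O W ρ) (a : A) (g : G) :
    (autFormsTensorMap G Γ U O W ρ A (f ⊗ₜ a) : G → W ⊗[O] A) g = (f : G → W) g ⊗ₜ a :=
  rfl

theorem exists_autFormsTensorMap_tmul_one_eq
    (hW : Function.Injective ((TensorProduct.mk O W A).flip 1))
    (F : AutomorphicForms G Γ U O (W ⊗[O] A) (tensorRep ρ A))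
    (hF : ∀ g, ∃ w : W, (F : G → W ⊗[O] A) g = w ⊗ₜ 1) :
    ∃ f, autFormsTensorMap G Γ U O W ρ A (f ⊗ₜ 1) = F := by
  choose f hf using hF
  have hfF : ∀ γ ∈ Γ, ∀ g u (hu : u ∈ U), f (γ * g * u) = ρ ⟨u, hu⟩⁻¹ (f g) := by
    intro γ hγ g u hu
    apply hW
    change f (γ * g * u) ⊗ₜ 1 = ρ ⟨u, hu⟩⁻¹ (f g) ⊗ₜ[O] (1 : A)
    rw [← hf, F.2 γ hγ g u hu, hf, tensorRep_tmul]
  exact ⟨⟨f, hfF⟩, Subtype.ext (funext fun g => (hf g).symm)⟩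

theorem exists_smul_forall_eq_tmul_one (S : Submonoid O) [IsLocalization S A]
    {ι : Type*} [Finite ι] (t : ι → G)
    (ht : ∀ g : G, ∃ i, ∃ γ ∈ Γ, ∃ u ∈ U, g = γ * t i * u)
    (F : AutomorphicForms G Γ U O (W ⊗[O] A) (tensorRep ρ A)) :
    ∃ s : S, ∀ g, ∃ w : W, (s : O) • (F : G → W ⊗[O] A) g = w ⊗ₜ 1 := by
  obtain ⟨s, hs⟩ := IsLocalizedModule.exist_integer_multiples_of_finite S
    ((TensorProduct.mk O W A).flip 1) fun i => (F : G → W ⊗[O] A) (t i)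
  choose x hx using hs
  refine ⟨s, fun g => ?_⟩
  obtain ⟨i, γ, hγ, u, hu, rfl⟩ := ht g
  refine ⟨ρ ⟨u, hu⟩⁻¹ (x i), ?_⟩
  rw [F.2 γ hγ (t i) u hu, ← map_smul, ← hx i, LinearMap.flip_apply, TensorProduct.mk_apply,
    tensorRep_tmul]

variable (S : Submonoid O) [IsLocalization S A] (hW : ∀ s : S, IsSMulRegular W (s : O))
include hW

theorem autFormsTensorMap_injective : Function.Injective (autFormsTensorMap G Γ U O W ρ A) := by
  have hWA := (IsLocalizedModule.injective_iff_isRegular S ((TensorProduct.mk O W A).flip 1)).mpr hW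
  refine IsLocalizedModule.injective_of_map_zero (S := S) (M := AutomorphicForms G Γ U O W ρ)
    (M' := AutomorphicForms G Γ U O W ρ ⊗[O] A)
    ((TensorProduct.mk O (AutomorphicForms G Γ U O W ρ) A).flip 1) fun f hf => ?_
  have hf0 : f = 0 := Subtype.ext <| funext fun g => hWA <| by
    simpa using congrFun (congrArg Subtype.val hf) g
  rw [hf0, map_zero]

theorem autFormsTensorMap_surjective {ι : Type*} [Finite ι] (t : ι → G)
    (ht : ∀ g : G, ∃ i, ∃ γ ∈ Γ, ∃ u ∈ U, g = γ * t i * u) :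
    Function.Surjective (autFormsTensorMap G Γ U O W ρ A) := by
  have hWA := (IsLocalizedModule.injective_iff_isRegular S ((TensorProduct.mk O W A).flip 1)).mpr hW
  refine IsLocalizedModule.surjective_of_exists_smul_mem_range S
    ((TensorProduct.mk O (AutomorphicForms G Γ U O W ρ) A).flip 1) (fun s F F' hFF' => ?_)
    fun F => ?_
  · refine Subtype.ext <| funext fun g => IsLocalizedModule.smul_injective
      ((TensorProduct.mk O W A).flip 1) s ?_
    exact congrFun (congrArg Subtype.val hFF') g
  · obtain ⟨s, hs⟩ := exists_smul_forall_eq_tmul_one S t ht F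
    obtain ⟨f, hf⟩ := exists_autFormsTensorMap_tmul_one_eq hWA ((s : O) • F) hs
    exact ⟨s, f, hf⟩

end AutomorphicForms

theorem autFormsTensorMap_fractionField_bijective_general
    (O : Type*) [CommRing O]
    (E : Type*) [Field E] [Algebra O E] [IsFractionRing O E]
    (G : Type*) [Group G] (Γ U : Subgroup G)
    (W : Type*) [AddCommGroup W] [Module O W] [Module.Free O W]
    (ρ : U →* (W ≃ₗ[O] W))
    (N : ℕ) (t : Fin N → G)
    (ht : ∀ g : G, ∃! i : Fin N, ∃ γ ∈ Γ, ∃ u ∈ U, g = γ * t i * u) :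
    Function.Bijective (autFormsTensorMap G Γ U O W ρ E) :=
  have hW (s : nonZeroDivisors O) : IsSMulRegular W (s : O) :=
    Module.Flat.isSMulRegular_of_nonZeroDivisors s.2
  ⟨autFormsTensorMap_injective (nonZeroDivisors O) hW,
    autFormsTensorMap_surjective (nonZeroDivisors O) hW t fun g => (ht g).exists⟩

/-- Let `O` be the ring of integers of a finite extension `E` of `ℚ_p`
(modelled as a discrete valuation ring with finite residue field of characteristic `p`,
with fraction field `E`).  Let `G` be a group, `Γ, U ≤ G` subgroups, and `W` a free
`O`-module with an `O`-linear action `ρ` of `U`.  Suppose `G` is the disjoint union of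
finitely many double cosets `Γ tᵢ U`.  Then the natural map
`S(U,W) ⊗_O E → S(U, W ⊗_O E)` is an isomorphism (no hypothesis on the groups
`tᵢ⁻¹Γtᵢ ∩ U` is needed). -/
theorem autFormsTensorMap_fractionField_bijective
    (p : ℕ) [Fact (Nat.Prime p)]
    (O : Type*) [CommRing O] [IsDomain O] [IsLocalRing O] [IsDiscreteValuationRing O]
    [Finite (IsLocalRing.ResidueField O)] [CharP (IsLocalRing.ResidueField O) p]
    (E : Type*) [Field E] [Algebra O E] [IsFractionRing O E]
    (G : Type*) [Group G] (Γ U : Subgroup G)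
    (W : Type*) [AddCommGroup W] [Module O W] [Module.Free O W]
    (ρ : U →* (W ≃ₗ[O] W))
    (N : ℕ) (t : Fin N → G)
    (ht : ∀ g : G, ∃! i : Fin N, ∃ γ ∈ Γ, ∃ u ∈ U, g = γ * t i * u) :
    Function.Bijective (autFormsTensorMap G Γ U O W ρ E) :=
  autFormsTensorMap_fractionField_bijective_general O E G Γ U W ρ N t ht
end

section
/- Let F be a field, G a group, and V an n-dimensional F-vector space with a linear action of G. Let ψ_1, …, ψ_n : G → F^× be pairwise distinct characters. Suppose 0 = V_0 ⊂ V_1 ⊂ ⋯ ⊂ V_n = V and 0 = V'_0 ⊂ V'_1 ⊂ ⋯ ⊂ V'_n = V are two chains of G-stable subspaces with dim_F V_i = dim_F V'_i = i for all i, such that G acts on each quotient V_i/V_{i−1} via the character ψ_i and likewise on each V'_i/V'_{i−1} via ψ_i. Then V_i = V'_i for all 0 ≤ i ≤ n. -/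
/-!
Induct along the flags. If `V'ᵢ = W'ᵢ` and `w ∈ W'ᵢ₊₁`, then `w` is an eigenvector for the
character `ψᵢ` modulo `V'ᵢ`. Descending along `V'` from `V'ₙ = V`: whenever `w ∈ V'ⱼ₊₁` with
`j > i`, the group acts on `w` modulo `V'ⱼ` both by `ψᵢ` and by `ψⱼ`, and since `ψᵢ ≠ ψⱼ` this
forces `w ∈ V'ⱼ`. Hence `W'ᵢ₊₁ ≤ V'ᵢ₊₁`, and equality follows from the dimensions.
-/

theorem Submodule.eq_of_sub_smul_mem_of_sub_smul_mem {F V : Type*} [Field F] [AddCommGroup V]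
    [Module F V] {U : Submodule F V} {x w : V} {a b : F} (hw : w ∉ U)
    (ha : x - a • w ∈ U) (hb : x - b • w ∈ U) : a = b := by
  by_contra hab
  have hsmul : (a - b) • w ∈ U := by
    simpa only [sub_sub_sub_cancel_left, sub_smul] using U.sub_mem hb ha
  exact hw ((U.smul_mem_iff (sub_ne_zero.mpr hab)).mp hsmul)

section CharacterFlag

variable {F V G : Type*} [Field F] [AddCommGroup V] [Module F V] {n : ℕ}
  {ρ : G → Module.End F V} {ψ : Fin n → G → F} {V' W' : Fin (n + 1) → Submodule F V}

theorem mem_of_sub_smul_mem_of_ne_characters (hmono : Monotone V')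
    (hact : ∀ (i : Fin n) (g : G), ∀ x ∈ V' i.succ, ρ g x - ψ i g • x ∈ V' i.castSucc)
    {k : Fin (n + 1)} {c : G → F} (hc : ∀ i : Fin n, k ≤ i.castSucc → c ≠ ψ i)
    {w : V} (hw : ∀ g, ρ g w - c g • w ∈ V' k) (j : Fin (n + 1)) (hj : w ∈ V' j) :
    w ∈ V' k := by
  induction j using Fin.induction with
  | zero => exact hmono (Fin.zero_le k) hj
  | succ i ih =>
    by_cases hik : i.succ ≤ k
    · exact hmono hik hj
    have hki : k ≤ i.castSucc := Fin.le_castSucc_iff.mpr (not_le.mp hik)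
    refine ih (by_contra fun hwi => ?_)
    obtain ⟨g, hg⟩ := Function.ne_iff.mp (hc i hki)
    exact hg (Submodule.eq_of_sub_smul_mem_of_sub_smul_mem hwi (hmono hki (hw g)) (hact i g w hj))

theorem succ_le_of_castSucc_eq (hψ : Function.Injective ψ) (hVmono : Monotone V')
    (hVtop : V' (Fin.last n) = ⊤)
    (hVact : ∀ (i : Fin n) (g : G), ∀ x ∈ V' i.succ, ρ g x - ψ i g • x ∈ V' i.castSucc)
    (hWact : ∀ (i : Fin n) (g : G), ∀ x ∈ W' i.succ, ρ g x - ψ i g • x ∈ W' i.castSucc)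
    {i : Fin n} (heq : V' i.castSucc = W' i.castSucc) : W' i.succ ≤ V' i.succ := by
  intro w hw
  refine mem_of_sub_smul_mem_of_ne_characters hVmono hVact (c := ψ i) (fun m hm => ?_)
    (fun g => ?_) (Fin.last n) (hVtop ▸ Submodule.mem_top)
  · exact hψ.ne (Fin.succ_le_castSucc_iff.mp hm).ne
  · exact hVmono (Fin.castSucc_le_succ i) (heq ▸ hWact i g w hw)

theorem eq_of_finrank_eq_of_zero_eq [FiniteDimensional F V] (hψ : Function.Injective ψ)
    (hVmono : Monotone V') (hVtop : V' (Fin.last n) = ⊤)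
    (hVact : ∀ (i : Fin n) (g : G), ∀ x ∈ V' i.succ, ρ g x - ψ i g • x ∈ V' i.castSucc)
    (hWact : ∀ (i : Fin n) (g : G), ∀ x ∈ W' i.succ, ρ g x - ψ i g • x ∈ W' i.castSucc)
    (hzero : V' 0 = W' 0)
    (hfinrank : ∀ i, Module.finrank F (V' i) = Module.finrank F (W' i)) (i : Fin (n + 1)) :
    V' i = W' i := by
  induction i using Fin.induction with
  | zero => exact hzero
  | succ i ih =>
    exact (Submodule.eq_of_le_of_finrank_eq
      (succ_le_of_castSucc_eq hψ hVmono hVtop hVact hWact ih) (hfinrank _).symm).symm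

end CharacterFlag

theorem flag_with_distinct_characters_unique_general
    (F : Type*) [Field F] (G : Type*) [Group G]
    (V : Type*) [AddCommGroup V] [Module F V] [FiniteDimensional F V]
    (n : ℕ) (hdim : Module.finrank F V = n)
    (ρ : G →* (V ≃ₗ[F] V))
    (ψ : Fin n → (G →* Fˣ)) (hψ : Function.Injective ψ)
    (V' W' : Fin (n + 1) → Submodule F V)
    (hVmono : Monotone V')
    (hVdim : ∀ i : Fin (n + 1), Module.finrank F (V' i) = (i : ℕ))
    (hWdim : ∀ i : Fin (n + 1), Module.finrank F (W' i) = (i : ℕ))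
    (hVact : ∀ (i : Fin n) (g : G), ∀ x ∈ V' i.succ,
      ρ g x - ((ψ i g : F) • x) ∈ V' i.castSucc)
    (hWact : ∀ (i : Fin n) (g : G), ∀ x ∈ W' i.succ,
      ρ g x - ((ψ i g : F) • x) ∈ W' i.castSucc) :
    ∀ i : Fin (n + 1), V' i = W' i := by
  have hψF : Function.Injective fun i g => (ψ i g : F) := fun i j h =>
    hψ (MonoidHom.ext fun g => Units.ext (congrFun h g))
  have hVtop : V' (Fin.last n) = ⊤ :=
    Submodule.eq_top_of_finrank_eq (by rw [hVdim, hdim, Fin.val_last])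
  have hzero : V' 0 = W' 0 := by
    rw [Submodule.finrank_eq_zero.mp (hVdim 0), Submodule.finrank_eq_zero.mp (hWdim 0)]
  exact eq_of_finrank_eq_of_zero_eq (ρ := fun g => (ρ g : V →ₗ[F] V)) hψF hVmono hVtop
    hVact hWact hzero fun i => by rw [hVdim, hWdim]

/-- Let `F` be a field, `G` a group, and `V` an `n`-dimensional
`F`-vector space with a linear `G`-action `ρ`.  Let `ψ 0, …, ψ (n-1) : G → Fˣ` be pairwise
distinct characters.  Suppose `V'` and `W'` are two full flags of `G`-stable subspaces
(`V' 0 = 0 ⊆ V' 1 ⊆ ⋯ ⊆ V' n = V` with `dim V' i = i`) such that `G` acts on each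
one-dimensional quotient `V' (i+1) / V' i` via the character `ψ i` (i.e.
`ρ g x ≡ ψ i g • x mod V' i` for `x ∈ V' (i+1)`), and likewise for `W'`.
Then `V' i = W' i` for all `i`. -/
theorem flag_with_distinct_characters_unique
    (F : Type*) [Field F] (G : Type*) [Group G]
    (V : Type*) [AddCommGroup V] [Module F V] [FiniteDimensional F V]
    (n : ℕ) (hdim : Module.finrank F V = n)
    (ρ : G →* (V ≃ₗ[F] V))
    (ψ : Fin n → (G →* Fˣ)) (hψ : Function.Injective ψ)
    (V' W' : Fin (n + 1) → Submodule F V)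
    (hVmono : Monotone V') (hWmono : Monotone W')
    (hVdim : ∀ i : Fin (n + 1), Module.finrank F (V' i) = (i : ℕ))
    (hWdim : ∀ i : Fin (n + 1), Module.finrank F (W' i) = (i : ℕ))
    (hVstab : ∀ (i : Fin (n + 1)) (g : G), ∀ x ∈ V' i, ρ g x ∈ V' i)
    (hWstab : ∀ (i : Fin (n + 1)) (g : G), ∀ x ∈ W' i, ρ g x ∈ W' i)
    (hVact : ∀ (i : Fin n) (g : G), ∀ x ∈ V' i.succ,
      ρ g x - ((ψ i g : F) • x) ∈ V' i.castSucc)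
    (hWact : ∀ (i : Fin n) (g : G), ∀ x ∈ W' i.succ,
      ρ g x - ((ψ i g : F) • x) ∈ W' i.castSucc) :
    ∀ i : Fin (n + 1), V' i = W' i :=
  flag_with_distinct_characters_unique_general F G V n hdim ρ ψ hψ V' W' hVmono hVdim hWdim hVact
    hWact
end

section
/- Let A be a discrete valuation ring with maximal ideal 𝔪 and finite residue field k of cardinality q and characteristic ℓ, and let n ≥ 1. Let I ≤ GL_n(A) be the Iwahori subgroup consisting of those matrices whose reduction modulo 𝔪 is upper triangular. If p is a prime with p ≠ ℓ and q ≢ 1 (mod p), then I contains no element of order p. -/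
open IsLocalRing Polynomial

/-! If `g` lies in the Iwahori subgroup and `g ^ p = 1`, its reduction `ḡ` is upper triangular
with `p`-th roots of unity on the diagonal; since `p ∤ q - 1` these are all `1`, so `ḡ - 1` is
nilpotent. As `p` is invertible, `(1 + x) ^ p = 1` forces `x = x ^ 2 * s` for some `s`, hence
`x = x ^ (j + 1) * s ^ j` for every `j`. This kills the nilpotent `ḡ - 1`, and then puts the
entries of `g - 1` in every power of `𝔪`, so `g = 1` by Krull's intersection theorem. -/

theorem exists_one_add_pow_eq_one_add_mul_add_sq_mul {R : Type*} [Ring R] (x : R) (n : ℕ) :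
    ∃ t : R, (1 + x) ^ n = 1 + n * x + x ^ 2 * t := by
  obtain ⟨Q, hQ⟩ : (X ^ 2 : ℤ[X]) ∣ (X + 1) ^ n - 1 - (n : ℤ[X]) * X := by
    rw [X_pow_dvd_iff]
    intro d hd
    interval_cases d <;> simp [coeff_X_add_one_pow, coeff_one, coeff_X]
  refine ⟨aeval x Q, ?_⟩
  have hQx := congrArg (aeval x) hQ
  simp only [map_sub, map_pow, map_add, map_one, map_mul, map_natCast, aeval_X] at hQx
  rw [← hQx, add_comm 1 x]
  abel

theorem exists_eq_sq_mul_of_one_add_pow_eq_one {R : Type*} [Ring R] {x : R} {n : ℕ}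
    (hn : IsUnit (n : R)) (h : (1 + x) ^ n = 1) : ∃ s : R, x = x ^ 2 * s := by
  obtain ⟨t, ht⟩ := exists_one_add_pow_eq_one_add_mul_add_sq_mul x n
  obtain ⟨u, hu⟩ := hn
  have hux : (u : R) * x = -(x ^ 2 * t) := by
    rw [h, add_assoc, eq_comm, add_eq_left] at ht
    rw [hu, eq_neg_of_add_eq_zero_left ht]
  refine ⟨-(↑u⁻¹ * t), ?_⟩
  calc x = ↑u⁻¹ * ((u : R) * x) := by rw [← mul_assoc, Units.inv_mul, one_mul]
    _ = x ^ 2 * -(↑u⁻¹ * t) := by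
      have hcomm : Commute (↑u⁻¹ : R) (x ^ 2) :=
        Commute.units_inv_left (by rw [hu]; exact Nat.cast_commute n _)
      rw [hux, mul_neg, mul_neg, ← mul_assoc, ← mul_assoc, hcomm.eq]

theorem eq_pow_succ_mul_pow_of_eq_sq_mul {M : Type*} [Monoid M] {x s : M}
    (h : x = x ^ 2 * s) : ∀ j : ℕ, x = x ^ (j + 1) * s ^ j
  | 0 => by simp
  | j + 1 => by
    have hshift : x ^ (j + 2) * s ^ (j + 1) = x ^ j * (x ^ 2 * s) * s ^ j := by
      rw [pow_add, pow_succ' s]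
      simp only [mul_assoc]
    rw [hshift, ← h, ← pow_succ]
    exact eq_pow_succ_mul_pow_of_eq_sq_mul h j

theorem eq_zero_of_isNilpotent_of_one_add_pow_eq_one {R : Type*} [Ring R] {x : R} {n : ℕ}
    (hn : IsUnit (n : R)) (hx : IsNilpotent x) (h : (1 + x) ^ n = 1) : x = 0 := by
  obtain ⟨s, hs⟩ := exists_eq_sq_mul_of_one_add_pow_eq_one hn h
  obtain ⟨k, hk⟩ := hx
  rw [eq_pow_succ_mul_pow_of_eq_sq_mul hs k, pow_succ, hk, zero_mul, zero_mul]

theorem CharP.cast_ne_zero_of_prime_of_ne (R : Type*) [NonAssocSemiring R] [Nontrivial R]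
    (ℓ : ℕ) [CharP R ℓ] {p : ℕ} (hp : p.Prime) (hpℓ : p ≠ ℓ) : (p : R) ≠ 0 := by
  rw [Ne, CharP.cast_eq_zero_iff R ℓ]
  intro hdvd
  rcases hp.eq_one_or_self_of_dvd ℓ hdvd with h1 | hself
  · exact CharP.char_ne_one R ℓ h1
  · exact hpℓ hself.symm

theorem FiniteField.eq_one_of_pow_eq_one_of_coprime {K : Type*} [Field K] [Finite K] {x : K}
    {p : ℕ} (hp : p ≠ 0) (hcop : p.Coprime (Nat.card K - 1)) (hx : x ^ p = 1) : x = 1 := by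
  have := Fintype.ofFinite K
  rw [Nat.card_eq_fintype_card] at hcop
  refine (pow_eq_one_iff_of_coprime hcop).mp ⟨hx, pow_card_sub_one_eq_one x ?_⟩
  rintro rfl
  simp [hp] at hx

theorem Nat.Prime.coprime_sub_one_of_not_modEq_one {p q : ℕ} (hp : p.Prime) (hq : 1 ≤ q)
    (hq1 : ¬ q ≡ 1 [MOD p]) : p.Coprime (q - 1) :=
  hp.coprime_iff_not_dvd.mpr fun hdvd => hq1 ((Nat.modEq_iff_dvd' hq).mpr hdvd).symm

namespace Matrix

variable {ι R : Type*} [Fintype ι]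

section UpperTriangular

variable [LinearOrder ι] [CommRing R] {M N : Matrix ι ι R}

theorem IsUpperTriangular.mul_apply_self (hM : M.IsUpperTriangular) (hN : N.IsUpperTriangular)
    (i : ι) : (M * N) i i = M i i * N i i := by
  rw [mul_apply]
  refine Finset.sum_eq_single i (fun k _ hki => ?_) (by simp)
  rcases hki.lt_or_gt with hlt | hgt
  · rw [hM hlt, zero_mul]
  · rw [hN hgt, mul_zero]

theorem IsUpperTriangular.pow_apply_self [DecidableEq ι] (hM : M.IsUpperTriangular) (i : ι) :
    ∀ k : ℕ, (M ^ k) i i = M i i ^ k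
  | 0 => by simp
  | k + 1 => by
    rw [pow_succ, IsUpperTriangular.mul_apply_self (hM.pow k) hM, hM.pow_apply_self i k, pow_succ]

theorem IsUpperTriangular.isNilpotent_of_diag_eq_zero [DecidableEq ι] (hM : M.IsUpperTriangular)
    (hdiag : M.diag = 0) : IsNilpotent M :=
  ⟨Fintype.card ι, by
    simpa [charpoly_of_isUpperTriangular M hM, show ∀ i, M i i = 0 from congrFun hdiag]
      using aeval_self_charpoly M⟩

theorem IsUpperTriangular.eq_one_of_pow_eq_one {K : Type*} [Field K] [Finite K] [DecidableEq ι]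
    {M : Matrix ι ι K} (hM : M.IsUpperTriangular) {p : ℕ} (hpK : (p : K) ≠ 0)
    (hcop : p.Coprime (Nat.card K - 1)) (h : M ^ p = 1) : M = 1 := by
  have hdiag : ∀ i, M i i = 1 := fun i =>
    FiniteField.eq_one_of_pow_eq_one_of_coprime (by rintro rfl; simp at hpK) hcop
      (by rw [← hM.pow_apply_self, h, one_apply_eq])
  rw [← sub_eq_zero]
  exact eq_zero_of_isNilpotent_of_one_add_pow_eq_one
    (by simpa using hpK.isUnit.map (algebraMap K (Matrix ι ι K)))
    (IsUpperTriangular.isNilpotent_of_diag_eq_zero (hM.sub blockTriangular_one)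
      (by ext i; simp [hdiag]))
    (by rw [add_sub_cancel, h])

end UpperTriangular

variable [DecidableEq ι] [CommRing R] {I J : Ideal R}

theorem mul_mem_matrix_mul {M N : Matrix ι ι R} (hM : M ∈ I.matrix ι) (hN : N ∈ J.matrix ι) :
    M * N ∈ (I * J).matrix ι := fun i j =>
  Ideal.sum_mem _ fun k _ => Ideal.mul_mem_mul (hM i k) (hN k j)

theorem pow_mem_matrix_pow {M : Matrix ι ι R} (hM : M ∈ I.matrix ι) :
    ∀ k : ℕ, M ^ k ∈ (I ^ k).matrix ι
  | 0 => by simp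
  | k + 1 => by
    rw [pow_succ, pow_succ]
    exact mul_mem_matrix_mul (pow_mem_matrix_pow hM k) hM

theorem eq_zero_of_one_add_pow_eq_one_of_mem_matrix [IsNoetherianRing R] [IsLocalRing R]
    (hI : I ≠ ⊤) {M : Matrix ι ι R} (hM : M ∈ I.matrix ι) {n : ℕ} (hn : IsUnit (n : R))
    (h : (1 + M) ^ n = 1) : M = 0 := by
  obtain ⟨s, hs⟩ := exists_eq_sq_mul_of_one_add_pow_eq_one
    (by simpa using hn.map (algebraMap R (Matrix ι ι R))) h
  have hpow : ∀ j : ℕ, M ∈ (I ^ j).matrix ι := by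
    intro j
    rw [eq_pow_succ_mul_pow_of_eq_sq_mul hs j, ← Ideal.mul_top (I ^ j)]
    exact mul_mem_matrix_mul (Ideal.matrix_monotone ι (Ideal.pow_le_pow_right j.le_succ)
      (pow_mem_matrix_pow hM (j + 1))) (by simp)
  ext i j
  have hmem : M i j ∈ ⨅ k : ℕ, I ^ k := Submodule.mem_iInf _ |>.mpr fun k => hpow k i j
  simpa [Ideal.iInf_pow_eq_bot_of_isLocalRing I hI] using hmem

end Matrix

theorem iwahori_no_element_of_order_p_general
    (A : Type*) [CommRing A] [IsDomain A] [IsLocalRing A] [IsDiscreteValuationRing A]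
    (q ℓ : ℕ) [Finite (ResidueField A)] (hq : Nat.card (ResidueField A) = q)
    [CharP (ResidueField A) ℓ]
    (n : ℕ)
    (p : ℕ) (hp : Nat.Prime p) (hpℓ : p ≠ ℓ) (hq1 : ¬ q ≡ 1 [MOD p]) :
    ∀ g : GL (Fin n) A,
      Matrix.BlockTriangular ((g : Matrix (Fin n) (Fin n) A).map (residue A)) id →
      orderOf g ≠ p := by
  intro g htri hg
  have hpk := CharP.cast_ne_zero_of_prime_of_ne (ResidueField A) ℓ hp hpℓ
  have hgp : (g : Matrix (Fin n) (Fin n) A) ^ p = 1 := by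
    rw [← Units.val_pow_eq_pow_val, ← hg, pow_orderOf_eq_one, Units.val_one]
  have hred : (residue A).mapMatrix ((g : Matrix (Fin n) (Fin n) A) - 1) = 0 := by
    rw [map_sub, map_one, sub_eq_zero]
    exact Matrix.IsUpperTriangular.eq_one_of_pow_eq_one htri hpk
      (hq ▸ hp.coprime_sub_one_of_not_modEq_one (hq ▸ Nat.card_pos) hq1)
      (by rw [← map_pow, hgp, map_one])
  have hg1 : (g : Matrix (Fin n) (Fin n) A) - 1 = 0 :=
    Matrix.eq_zero_of_one_add_pow_eq_one_of_mem_matrix (maximalIdeal.isMaximal A).ne_top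
      (fun i j => (residue_eq_zero_iff _).mp (congrFun₂ hred i j))
      ((residue_ne_zero_iff_isUnit _).mp (by simpa using hpk)) (by rw [add_sub_cancel, hgp])
  exact hp.one_lt.ne' (by rw [← hg, Units.val_eq_one.mp (sub_eq_zero.mp hg1), orderOf_one])

/-- Let `A` be a discrete valuation ring with maximal ideal `𝔪` and
finite residue field `k` of cardinality `q` and characteristic `ℓ`, and let `n ≥ 1`.
Let `I ≤ GL_n(A)` be the Iwahori subgroup of matrices whose reduction modulo `𝔪` is
upper triangular.  If `p` is a prime with `p ≠ ℓ` and `q ≢ 1 (mod p)`, then `I` contains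
no element of order `p`.  (Upper triangular means the reduction is `BlockTriangular`
with respect to `id`, i.e. the entries below the diagonal vanish.) -/
theorem iwahori_no_element_of_order_p
    (A : Type*) [CommRing A] [IsDomain A] [IsLocalRing A] [IsDiscreteValuationRing A]
    (q ℓ : ℕ) [Finite (ResidueField A)] (hq : Nat.card (ResidueField A) = q)
    [CharP (ResidueField A) ℓ]
    (n : ℕ) (hn : 1 ≤ n)
    (p : ℕ) (hp : Nat.Prime p) (hpℓ : p ≠ ℓ) (hq1 : ¬ q ≡ 1 [MOD p]) :
    ∀ g : GL (Fin n) A,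
      Matrix.BlockTriangular ((g : Matrix (Fin n) (Fin n) A).map (residue A)) id →
      orderOf g ≠ p :=
  iwahori_no_element_of_order_p_general A q ℓ hq n p hp hpℓ hq1
end
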